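/- Let A ∈ ℂ^{M×N_a} and B ∈ ℂ^{M×N_b} be matrices with unit ℓ²-norm columns, with A having coherence μ_a, B having coherence μ_b, and mutual coherence μ_m between A and B. Let E ⊆ {1,…,N_b} with |E| = n_e, set C_b = 1 − μ_b(n_e − 1), and assume C_b > 0 and n_e μ_m² < C_b. Let R_E = I_M − B_E (B_E^H B_E)^{−1} B_E^H (well defined since B_E^H B_E is invertible). Then for all column indices k ≠ ℓ of A, |(R_E a_k)^H (R_E a_ℓ)| ≤ ((μ_a C_b + n_e μ_m²)/(C_b − n_e μ_m²)) · ‖R_E a_k‖₂ · ‖R_E a_ℓ‖₂; i.e., the coherence of the column-normalized projected dictionary R_E A Δ is at most (μ_a C_b + n_e μ_m²)/(C_b − n_e μ_m²). -/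

import Mathlib

open scoped BigOperators ComplexConjugate
open Matrix

/-- Coherence of a matrix: max over distinct column pairs of |aₖᴴ aₗ| (0 if fewer than 2 columns). -/
noncomputable def coh {m n : Type*} [Fintype m] [Fintype n] (A : Matrix m n ℂ) : ℝ :=
  ⨆ k, ⨆ l, ⨆ _ : k ≠ l, ‖∑ i, conj (A i k) * A i l‖

/-- Mutual coherence between two matrices: max over column pairs of |aₖᴴ bₗ|. -/
noncomputable def mcoh {m na nb : Type*} [Fintype m] [Fintype na] [Fintype nb]
    (A : Matrix m na ℂ) (B : Matrix m nb ℂ) : ℝ :=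
  ⨆ k, ⨆ l, ‖∑ i, conj (A i k) * B i l‖

/-- All columns have unit ℓ²-norm. -/
def unitCols {m n : Type*} [Fintype m] (A : Matrix m n ℂ) : Prop :=
  ∀ k, ∑ i, ‖A i k‖ ^ 2 = 1

/-- Number of nonzero entries of a vector. -/
noncomputable def l0 {n : Type*} (v : n → ℂ) : ℕ := {i | v i ≠ 0}.ncard

/-- ℓ¹ norm of a vector. -/
noncomputable def l1 {n : Type*} [Fintype n] (v : n → ℂ) : ℝ := ∑ i, ‖v i‖

/-- Squared ℓ² norm of a vector. -/
noncomputable def l2sq {n : Type*} [Fintype n] (v : n → ℂ) : ℝ := ∑ i, ‖v i‖ ^ 2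

/-- Submatrix consisting of the columns with index in `E`. -/
def colsub {m n : Type*} (B : Matrix m n ℂ) (E : Finset n) : Matrix m {j // j ∈ E} ℂ :=
  fun i j => B i j.val

/-- Orthogonal projector onto the orthogonal complement of the column span of `B_E`. -/
noncomputable def projC {m n : Type*} [Fintype m] [DecidableEq m] [DecidableEq n]
    (B : Matrix m n ℂ) (E : Finset n) : Matrix m m ℂ :=
  1 - colsub B E * ((colsub B E)ᴴ * colsub B E)⁻¹ * (colsub B E)ᴴ

private lemma cs_dot {ι : Type*} [Fintype ι] (u v : ι → ℂ) :
    ‖dotProduct (star u) v‖ ≤ Real.sqrt (∑ i, ‖u i‖ ^ 2) * Real.sqrt (∑ i, ‖v i‖ ^ 2) := by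
  have h := norm_inner_le_norm (𝕜 := ℂ)
    ((WithLp.equiv 2 (ι → ℂ)).symm u) ((WithLp.equiv 2 (ι → ℂ)).symm v)
  rw [show inner ℂ ((WithLp.equiv 2 (ι → ℂ)).symm u) ((WithLp.equiv 2 (ι → ℂ)).symm v)
      = dotProduct (star u) v from by rw [dotProduct_comm]; rfl] at h
  simpa [EuclideanSpace.norm_eq] using h

private lemma dot_self_eq {ι : Type*} [Fintype ι] (v : ι → ℂ) :
    dotProduct (star v) v = ((∑ i, ‖v i‖ ^ 2 : ℝ) : ℂ) := by
  have h : ∀ i : ι, (starRingEnd ℂ) (v i) * v i = ((‖v i‖ ^ 2 : ℝ) : ℂ) := fun i => by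
    rw [← Complex.normSq_eq_conj_mul_self, Complex.normSq_eq_norm_sq]
  simp [dotProduct, Complex.star_def, h]

private lemma le_coh {m n : Type*} [Fintype m] [Fintype n] (A : Matrix m n ℂ)
    {k l : n} (h : k ≠ l) : ‖∑ i, conj (A i k) * A i l‖ ≤ coh A := by
  rw [coh]
  refine le_trans ?_ (le_ciSup (Set.Finite.bddAbove (Set.finite_range _)) k)
  refine le_trans ?_ (le_ciSup (Set.Finite.bddAbove (Set.finite_range _)) l)
  rw [ciSup_pos h]

private lemma coh_nonneg {m n : Type*} [Fintype m] [Fintype n] (A : Matrix m n ℂ) :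
    0 ≤ coh A := by
  rcases isEmpty_or_nonempty n with h | ⟨⟨k⟩⟩
  · rw [coh, Real.iSup_of_isEmpty]
  · rw [coh]
    refine le_trans ?_ (le_ciSup (Set.Finite.bddAbove (Set.finite_range _)) k)
    refine le_trans ?_ (le_ciSup (Set.Finite.bddAbove (Set.finite_range _)) k)
    haveI : IsEmpty (k ≠ k) := ⟨fun h => h rfl⟩
    exact (Real.iSup_of_isEmpty _).ge

private lemma le_mcoh {m na nb : Type*} [Fintype m] [Fintype na] [Fintype nb]
    (A : Matrix m na ℂ) (B : Matrix m nb ℂ) (k : na) (l : nb) :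
    ‖∑ i, conj (A i k) * B i l‖ ≤ mcoh A B := by
  rw [mcoh]
  calc ‖∑ i, conj (A i k) * B i l‖
      ≤ ⨆ l', ‖∑ i, conj (A i k) * B i l'‖ :=
        le_ciSup (f := fun l' => ‖∑ i, conj (A i k) * B i l'‖)
          (Set.Finite.bddAbove (Set.finite_range _)) l
    _ ≤ ⨆ k', ⨆ l', ‖∑ i, conj (A i k') * B i l'‖ :=
        le_ciSup (f := fun k' => ⨆ l', ‖∑ i, conj (A i k') * B i l'‖)
          (Set.Finite.bddAbove (Set.finite_range _)) k

private lemma quad_lb {n : Type*} [Fintype n] [DecidableEq n] (G : Matrix n n ℂ)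
    (hdiag : ∀ j, G j j = 1) (μ : ℝ) (hμ : 0 ≤ μ)
    (hoff : ∀ j j', j ≠ j' → ‖G j j'‖ ≤ μ) (x : n → ℂ) :
    (1 - μ * ((Fintype.card n : ℝ) - 1)) * (∑ j, ‖x j‖ ^ 2) ≤
      (dotProduct (star x) (G *ᵥ x)).re := by
  classical
  set s : ℝ := ∑ j, ‖x j‖ ^ 2 with hs
  have hQ : dotProduct (star x) (G *ᵥ x) =
      (s : ℂ) + ∑ j, ∑ j' ∈ Finset.univ.erase j, conj (x j) * G j j' * x j' := by
    have h1 : dotProduct (star x) (G *ᵥ x)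
        = ∑ j, ∑ j', conj (x j) * G j j' * x j' := by
      simp [dotProduct, Matrix.mulVec, Complex.star_def, Finset.mul_sum, mul_assoc]
    rw [h1]
    have h2 : ∀ j : n, ∑ j', conj (x j) * G j j' * x j'
        = ((‖x j‖ ^ 2 : ℝ) : ℂ) + ∑ j' ∈ Finset.univ.erase j, conj (x j) * G j j' * x j' := by
      intro j
      rw [← Finset.add_sum_erase _ _ (Finset.mem_univ j), hdiag j, mul_one,
        ← Complex.normSq_eq_conj_mul_self, Complex.normSq_eq_norm_sq]
    rw [Finset.sum_congr rfl fun j _ => h2 j, Finset.sum_add_distrib]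
    push_cast [hs]
    ring
  set off : ℂ := ∑ j, ∑ j' ∈ Finset.univ.erase j, conj (x j) * G j j' * x j' with hoffdef
  have hre : (dotProduct (star x) (G *ᵥ x)).re = s + off.re := by
    rw [hQ]; simp
  have hoffnorm : ‖off‖ ≤ μ * ((Fintype.card n : ℝ) - 1) * s := by
    have hb : ∀ j : n, ‖∑ j' ∈ Finset.univ.erase j, conj (x j) * G j j' * x j'‖
        ≤ ∑ j' ∈ Finset.univ.erase j, ‖x j‖ * μ * ‖x j'‖ := by
      intro j
      refine (norm_sum_le _ _).trans (Finset.sum_le_sum fun j' hj' => ?_)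
      rw [norm_mul, norm_mul, RCLike.norm_conj]
      gcongr
      exact hoff j j' (fun hjj => (Finset.mem_erase.mp hj').1 hjj.symm)
    have h3 : ‖off‖ ≤ ∑ j, ∑ j' ∈ Finset.univ.erase j, ‖x j‖ * μ * ‖x j'‖ :=
      (norm_sum_le _ _).trans (Finset.sum_le_sum fun j _ => hb j)
    have h4 : ∑ j, ∑ j' ∈ Finset.univ.erase j, ‖x j‖ * μ * ‖x j'‖
        = μ * ((∑ j, ‖x j‖) ^ 2 - ∑ j, ‖x j‖ ^ 2) := by
      have : ∀ j : n, ∑ j' ∈ Finset.univ.erase j, ‖x j‖ * μ * ‖x j'‖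
          = μ * (‖x j‖ * ((∑ j', ‖x j'‖) - ‖x j‖)) := by
        intro j
        rw [← Finset.mul_sum, Finset.sum_erase_eq_sub (Finset.mem_univ j)]
        ring
      rw [Finset.sum_congr rfl fun j _ => this j, ← Finset.mul_sum]
      rw [show ∑ j, ‖x j‖ * ((∑ j', ‖x j'‖) - ‖x j‖)
          = (∑ j, ‖x j‖ * (∑ j', ‖x j'‖)) - ∑ j, ‖x j‖ * ‖x j‖ from by
        rw [← Finset.sum_sub_distrib]; exact Finset.sum_congr rfl fun j _ => by ring]
      rw [← Finset.sum_mul]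
      ring_nf
    have h5 : (∑ j, ‖x j‖) ^ 2 ≤ (Fintype.card n : ℝ) * ∑ j, ‖x j‖ ^ 2 := by
      simpa using sq_sum_le_card_mul_sum_sq (s := (Finset.univ : Finset n))
        (f := fun j => ‖x j‖)
    calc ‖off‖ ≤ μ * ((∑ j, ‖x j‖) ^ 2 - ∑ j, ‖x j‖ ^ 2) := h4 ▸ h3
      _ ≤ μ * ((Fintype.card n : ℝ) * s - s) := by
          apply mul_le_mul_of_nonneg_left _ hμ
          simp only [hs]; linarith
      _ = μ * ((Fintype.card n : ℝ) - 1) * s := by ring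
  have : -(μ * ((Fintype.card n : ℝ) - 1) * s) ≤ off.re := by
    have h6 : |off.re| ≤ ‖off‖ := by
      exact Complex.abs_re_le_norm off
    have := (abs_le.mp h6).1
    linarith
  rw [hre]; linarith

set_option maxHeartbeats 1000000

/-- Coherence bound for the column-normalized projected dictionary R_E A Δ. -/
theorem projected_dictionary_coherence_bound
    {M Na Nb : ℕ} (A : Matrix (Fin M) (Fin Na) ℂ) (B : Matrix (Fin M) (Fin Nb) ℂ)
    (hA : unitCols A) (hB : unitCols B)
    (μa μb μm : ℝ) (hμa : μa = coh A) (hμb : μb = coh B) (hμm : μm = mcoh A B)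
    (E : Finset (Fin Nb)) (ne : ℕ) (hne : E.card = ne)
    (Cb : ℝ) (hCb : Cb = 1 - μb * ((ne : ℝ) - 1))
    (hCbpos : 0 < Cb) (hsmall : (ne : ℝ) * μm ^ 2 < Cb) :
    ∀ k l : Fin Na, k ≠ l →
      ‖∑ i, conj (((projC B E).mulVec (fun i => A i k)) i) *
            ((projC B E).mulVec (fun i => A i l)) i‖ ≤
        ((μa * Cb + (ne : ℝ) * μm ^ 2) / (Cb - (ne : ℝ) * μm ^ 2)) *
          Real.sqrt (l2sq ((projC B E).mulVec (fun i => A i k))) *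
          Real.sqrt (l2sq ((projC B E).mulVec (fun i => A i l))) := by
  intro k l hkl
  classical
  have hstar : ∀ (u v : Fin M → ℂ), (∑ i, conj (u i) * v i) = dotProduct (star u) v := by
    intro u v; simp [dotProduct, Complex.star_def]
  set Bs : Matrix (Fin M) {j // j ∈ E} ℂ := colsub B E with hBs
  set G : Matrix {j // j ∈ E} {j // j ∈ E} ℂ := Bsᴴ * Bs with hG
  set R : Matrix (Fin M) (Fin M) ℂ := projC B E with hR
  have hRdef : R = 1 - Bs * G⁻¹ * Bsᴴ := by rw [hR, projC, ← hBs, ← hG]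
  -- basic entries of G
  have hGdiag : ∀ j, G j j = 1 := by
    intro j
    have h1 : G j j = ∑ i, conj (B i j.val) * B i j.val := by
      simp [hG, hBs, Matrix.mul_apply, colsub, Matrix.conjTranspose_apply, Complex.star_def]
    have h2 : ∑ i, conj (B i j.val) * B i j.val
        = dotProduct (star fun i => B i j.val) (fun i => B i j.val) := hstar _ _
    rw [h1, h2, dot_self_eq, hB j.val, Complex.ofReal_one]
  have hGoff : ∀ j j', j ≠ j' → ‖G j j'‖ ≤ μb := by
    intro j j' hjj
    have h1 : G j j' = ∑ i, conj (B i j.val) * B i j'.val := by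
      simp [hG, hBs, Matrix.mul_apply, colsub, Matrix.conjTranspose_apply, Complex.star_def]
    rw [h1, hμb]
    exact le_coh B (fun h => hjj (Subtype.ext h))
  have hμb0 : 0 ≤ μb := hμb ▸ coh_nonneg B
  have hμa0 : 0 ≤ μa := hμa ▸ coh_nonneg A
  have hcard : (Fintype.card {j // j ∈ E} : ℝ) = (ne : ℝ) := by
    rw [Fintype.card_coe, hne]
  have hQlb : ∀ x : {j // j ∈ E} → ℂ,
      Cb * (∑ j, ‖x j‖ ^ 2) ≤ (dotProduct (star x) (G *ᵥ x)).re := by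
    intro x
    have h := quad_lb G hGdiag μb hμb0 hGoff x
    rw [hcard] at h
    rw [hCb]; exact h
  -- invertibility of G
  have hGunit : IsUnit G := by
    refine Matrix.mulVec_injective_iff_isUnit.mp ?_
    intro x y hxy
    have hz : G *ᵥ (x - y) = 0 := by
      rw [Matrix.mulVec_sub, show G.mulVec x = G.mulVec y from hxy, sub_self]
    have h0 := hQlb (x - y)
    rw [hz] at h0
    simp only [dotProduct_zero, Complex.zero_re] at h0
    have hsumnn : 0 ≤ ∑ j, ‖(x - y) j‖ ^ 2 :=
      Finset.sum_nonneg fun j _ => by positivity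
    have hsum0 : ∑ j, ‖(x - y) j‖ ^ 2 = 0 := by nlinarith
    have hzero : ∀ j ∈ Finset.univ, ‖(x - y) j‖ ^ 2 = 0 :=
      (Finset.sum_eq_zero_iff_of_nonneg fun j _ => by positivity).mp hsum0
    have : x - y = 0 := by
      funext j
      have := hzero j (Finset.mem_univ j)
      have : ‖(x - y) j‖ = 0 := by nlinarith [norm_nonneg ((x - y) j)]
      exact norm_eq_zero.mp this
    exact sub_eq_zero.mp this
  have hGdet : IsUnit G.det := (Matrix.isUnit_iff_isUnit_det G).mp hGunit
  have hGinv : G * G⁻¹ = 1 := Matrix.mul_nonsing_inv G hGdet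
  have hGinv' : G⁻¹ * G = 1 := Matrix.nonsing_inv_mul G hGdet
  have hGH : Gᴴ = G := by
    rw [hG, Matrix.conjTranspose_mul, Matrix.conjTranspose_conjTranspose]
  have hGiH : G⁻¹ᴴ = G⁻¹ := by rw [Matrix.conjTranspose_nonsing_inv, hGH]
  -- projector identities
  have hRH : Rᴴ = R := by
    have hPH : (Bs * G⁻¹ * Bsᴴ)ᴴ = Bs * G⁻¹ * Bsᴴ := by
      rw [Matrix.conjTranspose_mul, Matrix.conjTranspose_mul,
        Matrix.conjTranspose_conjTranspose, hGiH, ← Matrix.mul_assoc]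
    rw [hRdef, Matrix.conjTranspose_sub, Matrix.conjTranspose_one, hPH]
  have hRR : R * R = R := by
    have hPP : (Bs * G⁻¹ * Bsᴴ) * (Bs * G⁻¹ * Bsᴴ) = Bs * G⁻¹ * Bsᴴ := by
      calc (Bs * G⁻¹ * Bsᴴ) * (Bs * G⁻¹ * Bsᴴ)
          = Bs * (G⁻¹ * ((Bsᴴ * Bs) * (G⁻¹ * Bsᴴ))) := by
            simp only [Matrix.mul_assoc]
        _ = Bs * G⁻¹ * Bsᴴ := by
            rw [← hG, ← Matrix.mul_assoc G⁻¹ G _, hGinv', Matrix.one_mul, Matrix.mul_assoc]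
    have expand : ∀ P : Matrix (Fin M) (Fin M) ℂ,
        (1 - P) * (1 - P) = 1 - P - P + P * P := fun P => by noncomm_ring
    rw [hRdef, expand, hPP]
    abel
  -- key identity
  have hkey : ∀ a b : Fin M → ℂ,
      dotProduct (star (R *ᵥ a)) (R *ᵥ b)
        = dotProduct (star a) b
          - dotProduct (star (Bsᴴ *ᵥ a)) (G⁻¹ *ᵥ (Bsᴴ *ᵥ b)) := by
    intro a b
    have h1 : dotProduct (star (R *ᵥ a)) (R *ᵥ b) = dotProduct (star a) (R *ᵥ b) := by
      rw [Matrix.star_mulVec, Matrix.dotProduct_mulVec, Matrix.vecMul_vecMul, hRH, hRR,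
        ← Matrix.dotProduct_mulVec]
    rw [h1, hRdef, Matrix.sub_mulVec, Matrix.one_mulVec, dotProduct_sub]
    congr 1
    rw [← Matrix.mulVec_mulVec, ← Matrix.mulVec_mulVec,
      Matrix.dotProduct_mulVec, Matrix.star_mulVec, Matrix.conjTranspose_conjTranspose]
  -- bounds on correlation vectors
  set t : ℝ := (ne : ℝ) * μm ^ 2 with ht
  have ht0 : 0 ≤ t := by positivity
  have hcbound : ∀ k' : Fin Na, ∑ j, ‖(Bsᴴ *ᵥ (fun i => A i k')) j‖ ^ 2 ≤ t := by
    intro k'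
    have he : ∀ j : {j // j ∈ E}, ‖(Bsᴴ *ᵥ (fun i => A i k')) j‖ ≤ μm := by
      intro j
      have h1 : (Bsᴴ *ᵥ (fun i => A i k')) j = conj (∑ i, conj (A i k') * B i j.val) := by
        simp only [Matrix.mulVec, Matrix.conjTranspose_apply, hBs, colsub, dotProduct,
          Complex.star_def, map_sum, _root_.map_mul, Complex.conj_conj]
        exact Finset.sum_congr rfl fun i _ => mul_comm _ _
      rw [h1, RCLike.norm_conj, hμm]
      exact le_mcoh A B k' j.val
    calc ∑ j, ‖(Bsᴴ *ᵥ (fun i => A i k')) j‖ ^ 2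
        ≤ ∑ _j : {j // j ∈ E}, μm ^ 2 := Finset.sum_le_sum fun j _ => by
          nlinarith [he j, norm_nonneg ((Bsᴴ *ᵥ (fun i => A i k')) j)]
      _ = t := by
          rw [Finset.sum_const, Finset.card_univ, Fintype.card_coe, hne, nsmul_eq_mul, ht]
  have hinv : ∀ d : {j // j ∈ E} → ℂ,
      Cb * Real.sqrt (∑ j, ‖(G⁻¹ *ᵥ d) j‖ ^ 2) ≤ Real.sqrt (∑ j, ‖d j‖ ^ 2) := by
    intro d
    set y := G⁻¹ *ᵥ d with hy
    have hGy : G *ᵥ y = d := by rw [hy, Matrix.mulVec_mulVec, hGinv, Matrix.one_mulVec]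
    set p := Real.sqrt (∑ j, ‖y j‖ ^ 2) with hp
    set q := Real.sqrt (∑ j, ‖d j‖ ^ 2) with hq
    have hp0 : 0 ≤ p := Real.sqrt_nonneg _
    have hq0 : 0 ≤ q := Real.sqrt_nonneg _
    have hp2 : p ^ 2 = ∑ j, ‖y j‖ ^ 2 :=
      Real.sq_sqrt (Finset.sum_nonneg fun j _ => by positivity)
    have h1 : Cb * p ^ 2 ≤ (dotProduct (star y) (G *ᵥ y)).re := by
      rw [hp2]; exact hQlb y
    have h2 : (dotProduct (star y) (G *ᵥ y)).re ≤ ‖dotProduct (star y) d‖ := by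
      rw [hGy]; exact Complex.re_le_norm _
    have h3 : ‖dotProduct (star y) d‖ ≤ p * q := cs_dot y d
    rcases eq_or_lt_of_le hp0 with h | h
    · rw [← h, mul_zero]; exact hq0
    · have h4 : (Cb * p) * p ≤ q * p := by
        calc (Cb * p) * p = Cb * p ^ 2 := by ring
          _ ≤ ‖dotProduct (star y) d‖ := le_trans h1 h2
          _ ≤ p * q := h3
          _ = q * p := mul_comm _ _
      exact le_of_mul_le_mul_right h4 h
  have hD : ∀ c d : {j // j ∈ E} → ℂ, (∑ j, ‖c j‖ ^ 2 ≤ t) → (∑ j, ‖d j‖ ^ 2 ≤ t) →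
      ‖dotProduct (star c) (G⁻¹ *ᵥ d)‖ ≤ t / Cb := by
    intro c d hc hd
    have h1 := cs_dot c (G⁻¹ *ᵥ d)
    have h2 := hinv d
    have hcs : Real.sqrt (∑ j, ‖c j‖ ^ 2) ≤ Real.sqrt t := Real.sqrt_le_sqrt hc
    have hds : Real.sqrt (∑ j, ‖d j‖ ^ 2) ≤ Real.sqrt t := Real.sqrt_le_sqrt hd
    have hy0 : 0 ≤ Real.sqrt (∑ j, ‖(G⁻¹ *ᵥ d) j‖ ^ 2) := Real.sqrt_nonneg _
    have hyb : Real.sqrt (∑ j, ‖(G⁻¹ *ᵥ d) j‖ ^ 2) ≤ Real.sqrt t / Cb := by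
      rw [le_div_iff₀ hCbpos]
      calc Real.sqrt (∑ j, ‖(G⁻¹ *ᵥ d) j‖ ^ 2) * Cb
          = Cb * Real.sqrt (∑ j, ‖(G⁻¹ *ᵥ d) j‖ ^ 2) := mul_comm _ _
        _ ≤ Real.sqrt (∑ j, ‖d j‖ ^ 2) := h2
        _ ≤ Real.sqrt t := hds
    calc ‖dotProduct (star c) (G⁻¹ *ᵥ d)‖
        ≤ Real.sqrt (∑ j, ‖c j‖ ^ 2) * Real.sqrt (∑ j, ‖(G⁻¹ *ᵥ d) j‖ ^ 2) := h1
      _ ≤ Real.sqrt t * (Real.sqrt t / Cb) :=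
          mul_le_mul hcs hyb hy0 (Real.sqrt_nonneg t)
      _ = t / Cb := by rw [mul_div_assoc', Real.mul_self_sqrt ht0]
  -- assemble
  set a : Fin M → ℂ := fun i => A i k with ha
  set b : Fin M → ℂ := fun i => A i l with hb'
  set c : {j // j ∈ E} → ℂ := Bsᴴ *ᵥ a with hc
  set d : {j // j ∈ E} → ℂ := Bsᴴ *ᵥ b with hd
  have hab : ‖dotProduct (star a) b‖ ≤ μa := by
    rw [← hstar, hμa]; exact le_coh A hkl
  have hDkl : ‖dotProduct (star c) (G⁻¹ *ᵥ d)‖ ≤ t / Cb := hD c d (hcbound k) (hcbound l)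
  have hqk : ‖dotProduct (star c) (G⁻¹ *ᵥ c)‖ ≤ t / Cb := hD c c (hcbound k) (hcbound k)
  have hql : ‖dotProduct (star d) (G⁻¹ *ᵥ d)‖ ≤ t / Cb := hD d d (hcbound l) (hcbound l)
  have hselfa : dotProduct (star a) a = 1 := by
    rw [dot_self_eq, show (∑ i, ‖a i‖ ^ 2) = 1 from hA k, Complex.ofReal_one]
  have hselfb : dotProduct (star b) b = 1 := by
    rw [dot_self_eq, show (∑ i, ‖b i‖ ^ 2) = 1 from hA l, Complex.ofReal_one]
  have hl2a : l2sq (R *ᵥ a) = 1 - (dotProduct (star c) (G⁻¹ *ᵥ c)).re := by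
    have h1 : ((l2sq (R *ᵥ a) : ℝ) : ℂ) = dotProduct (star (R *ᵥ a)) (R *ᵥ a) :=
      (dot_self_eq _).symm
    rw [hkey a a, hselfa, ← hc] at h1
    have := congrArg Complex.re h1
    simpa using this
  have hl2b : l2sq (R *ᵥ b) = 1 - (dotProduct (star d) (G⁻¹ *ᵥ d)).re := by
    have h1 : ((l2sq (R *ᵥ b) : ℝ) : ℂ) = dotProduct (star (R *ᵥ b)) (R *ᵥ b) :=
      (dot_self_eq _).symm
    rw [hkey b b, hselfb, ← hd] at h1
    have := congrArg Complex.re h1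
    simpa using this
  have hrebound : ∀ z : ℂ, ‖z‖ ≤ t / Cb → z.re ≤ t / Cb := fun z hz =>
    le_trans (Complex.re_le_norm z) hz
  have hlow : (Cb - t) / Cb = 1 - t / Cb := by field_simp
  have hl2alow : (Cb - t) / Cb ≤ l2sq (R *ᵥ a) := by
    rw [hlow, hl2a]; linarith [hrebound _ hqk]
  have hl2blow : (Cb - t) / Cb ≤ l2sq (R *ᵥ b) := by
    rw [hlow, hl2b]; linarith [hrebound _ hql]
  -- final chain
  have hLHS : ‖∑ i, conj ((R *ᵥ a) i) * ((R *ᵥ b) i)‖ ≤ μa + t / Cb := by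
    rw [hstar, hkey a b, ← hc, ← hd]
    calc ‖dotProduct (star a) b - dotProduct (star c) (G⁻¹ *ᵥ d)‖
        ≤ ‖dotProduct (star a) b‖ + ‖dotProduct (star c) (G⁻¹ *ᵥ d)‖ := norm_sub_le _ _
      _ ≤ μa + t / Cb := add_le_add hab hDkl
  set ρ : ℝ := (μa * Cb + t) / (Cb - t) with hρ
  have hCbt : 0 < Cb - t := by linarith
  have hρ0 : 0 ≤ ρ := div_nonneg (by positivity) (le_of_lt hCbt)
  have hfrac0 : 0 ≤ (Cb - t) / Cb := div_nonneg (le_of_lt hCbt) (le_of_lt hCbpos)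
  have hkeyval : ρ * ((Cb - t) / Cb) = μa + t / Cb := by
    rw [hρ]; field_simp
  have hfin : μa + t / Cb ≤ ρ * Real.sqrt (l2sq (R *ᵥ a)) * Real.sqrt (l2sq (R *ᵥ b)) := by
    have hs1 : Real.sqrt ((Cb - t) / Cb) ≤ Real.sqrt (l2sq (R *ᵥ a)) :=
      Real.sqrt_le_sqrt hl2alow
    have hs2 : Real.sqrt ((Cb - t) / Cb) ≤ Real.sqrt (l2sq (R *ᵥ b)) :=
      Real.sqrt_le_sqrt hl2blow
    calc μa + t / Cb = ρ * (Real.sqrt ((Cb - t) / Cb) * Real.sqrt ((Cb - t) / Cb)) := by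
          rw [Real.mul_self_sqrt hfrac0, hkeyval]
      _ ≤ ρ * (Real.sqrt (l2sq (R *ᵥ a)) * Real.sqrt (l2sq (R *ᵥ b))) := by
          apply mul_le_mul_of_nonneg_left _ hρ0
          exact mul_le_mul hs1 hs2 (Real.sqrt_nonneg _) (Real.sqrt_nonneg _)
      _ = ρ * Real.sqrt (l2sq (R *ᵥ a)) * Real.sqrt (l2sq (R *ᵥ b)) := by ring
  exact le_trans hLHS hfin
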